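/- Huet's lemma under invariant: let I be an invariant of a transition system (A, →) that is terminating under I (every transition sequence consisting of I-states is finite), and let ∼ be an equivalence relation on A. Then the system is observably confluent modulo ∼ (for all I-states s₀, s₀', s₁, s₂, if s₁ *← s₀ ∼ s₀' →* s₂ then s₁ and s₂ are joinable modulo ∼ via I-states) if and only if it is locally observably confluent modulo ∼ (for all I-states, the extreme states of every α-corner s₁ ← s₀ → s₂ and of every β-corner s₁ ∼ s₀ → s₂ with s₀, s₁, s₂ ∈ I are joinable modulo ∼ via I-states). -/

import Mathlib

/-!
Restricted to the `I`-states, `→` is terminating, so every state has a normal form, and it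
suffices to show that normal forms of `∼`-related states are `∼`-related. For two normal forms
of one state this is a well-founded induction on the state, closing the first α-corner by the
induction hypothesis. For states `a ∼ b` it is a nested induction on `b` and then `a`: a
β-corner at `b` (or at `a` once `b` is normal) replaces the pair by one that is smaller in one
component and no larger in the other.
-/

namespace Relation

variable {α : Type*} {R E : α → α → Prop}

def JoinModulo (R E : α → α → Prop) (b c : α) : Prop :=
  ∃ u v, ReflTransGen R b u ∧ ReflTransGen R c v ∧ E u v

def ConfluentModulo (R E : α → α → Prop) : Prop :=
  ∀ a a' b c, ReflTransGen R a b → E a a' → ReflTransGen R a' c → JoinModulo R E b c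

/-- Huet's local confluence modulo `E`: all α-corners `b ← a → c` and all
β-corners `b ∼ a → c` are joinable modulo `E`. -/
def LocallyConfluentModulo (R E : α → α → Prop) : Prop :=
  (∀ a b c, R a b → R a c → JoinModulo R E b c) ∧
    (∀ a b c, E b a → R a c → JoinModulo R E b c)

def IsNormal (R : α → α → Prop) (n : α) : Prop :=
  ∀ b, ¬ R n b

def IsNormalForm (R : α → α → Prop) (a n : α) : Prop :=
  ReflTransGen R a n ∧ IsNormal R n

def NormalFormUniqueModulo (R E : α → α → Prop) (a : α) : Prop :=
  ∀ n₁ n₂, IsNormalForm R a n₁ → IsNormalForm R a n₂ → E n₁ n₂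

theorem IsNormal.eq_of_reflTransGen {n m : α} (hn : IsNormal R n) (h : ReflTransGen R n m) :
    n = m :=
  h.cases_head.resolve_right fun ⟨b, hnb, _⟩ => hn b hnb

theorem IsNormalForm.head {a b n : α} (hab : ReflTransGen R a b) (h : IsNormalForm R b n) :
    IsNormalForm R a n :=
  ⟨hab.trans h.1, h.2⟩

theorem IsNormalForm.eq_or_exists_head {a n : α} (h : IsNormalForm R a n) :
    a = n ∨ ∃ b, R a b ∧ IsNormalForm R b n :=
  h.1.cases_head.imp_right fun ⟨b, hab, hbn⟩ => ⟨b, hab, hbn, h.2⟩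

theorem exists_isNormalForm (hwf : WellFounded (flip R)) (a : α) : ∃ n, IsNormalForm R a n := by
  obtain ⟨n, han, hmin⟩ := hwf.has_min {b | ReflTransGen R a b} ⟨a, .refl⟩
  exact ⟨n, han, fun b hnb => hmin b (han.tail hnb) hnb⟩

theorem isNormalForm_equiv_of_equiv (hwf : WellFounded (flip R)) (hE : Equivalence E)
    (hβ : ∀ a b c, E b a → R a c → JoinModulo R E b c) {a b n₁ n₂ : α}
    (ha : ∀ z, ReflTransGen R a z → NormalFormUniqueModulo R E z)
    (hb : ∀ z, ReflTransGen R b z → NormalFormUniqueModulo R E z)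
    (hab : E a b) (hn₁ : IsNormalForm R a n₁) (hn₂ : IsNormalForm R b n₂) : E n₁ n₂ := by
  induction b using hwf.transGen.induction generalizing a n₁ n₂ with
  | _ b IHb =>
  induction a using hwf.transGen.induction generalizing n₁ with
  | _ a IHa =>
  rcases hn₂.eq_or_exists_head with rfl | ⟨b₁, hbb₁, hn₂'⟩
  · rcases hn₁.eq_or_exists_head with rfl | ⟨a₁, haa₁, hn₁'⟩
    · exact hab
    · obtain ⟨u, v, hu, hv, huv⟩ := hβ a b a₁ (hE.symm hab) haa₁
      obtain rfl := hn₂.2.eq_of_reflTransGen hu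
      obtain ⟨m, hm⟩ := exists_isNormalForm hwf v
      have hav : TransGen R a v := .head' haa₁ hv
      exact hE.trans (ha a₁ (.single haa₁) n₁ m hn₁' (hm.head hv))
        (IHa v (transGen_swap.2 hav) (fun z hz => ha z (hav.to_reflTransGen.trans hz))
          (hE.symm huv) hm)
  · obtain ⟨p, q, hp, hq, hpq⟩ := hβ b a b₁ hab hbb₁
    obtain ⟨p', hp'⟩ := exists_isNormalForm hwf p
    obtain ⟨q', hq'⟩ := exists_isNormalForm hwf q
    have hbq : TransGen R b q := .head' hbb₁ hq
    have hp'q' : E p' q' := IHb q (transGen_swap.2 hbq)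
      (fun z hz => ha z (hp.trans hz)) (fun z hz => hb z (hbq.to_reflTransGen.trans hz))
      hpq hp' hq'
    exact hE.trans (hE.trans (ha a .refl n₁ p' hn₁ (hp'.head hp)) hp'q')
      (hb b₁ (.single hbb₁) q' n₂ (hq'.head hq) hn₂')

theorem normalFormUniqueModulo_of_locallyConfluentModulo (hwf : WellFounded (flip R))
    (hE : Equivalence E) (h : LocallyConfluentModulo R E) (a : α) :
    NormalFormUniqueModulo R E a := by
  induction a using hwf.transGen.induction with
  | _ a IH =>
  have below (z : α) (haz : TransGen R a z) : NormalFormUniqueModulo R E z :=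
    IH z (transGen_swap.2 haz)
  intro n₁ n₂ hn₁ hn₂
  rcases hn₁.eq_or_exists_head with rfl | ⟨b, hab, hn₁'⟩
  · rw [hn₁.2.eq_of_reflTransGen hn₂.1]
    exact hE.refl _
  rcases hn₂.eq_or_exists_head with rfl | ⟨c, hac, hn₂'⟩
  · rw [hn₂.2.eq_of_reflTransGen hn₁.1]
    exact hE.refl _
  obtain ⟨u, v, hu, hv, huv⟩ := h.1 a b c hab hac
  obtain ⟨m₁, hm₁⟩ := exists_isNormalForm hwf u
  obtain ⟨m₂, hm₂⟩ := exists_isNormalForm hwf v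
  have hm₁m₂ : E m₁ m₂ := isNormalForm_equiv_of_equiv hwf hE h.2
    (fun z hz => below z (.head' hab (hu.trans hz)))
    (fun z hz => below z (.head' hac (hv.trans hz))) huv hm₁ hm₂
  exact hE.trans (hE.trans (below b (.single hab) n₁ m₁ hn₁' (hm₁.head hu)) hm₁m₂)
    (below c (.single hac) m₂ n₂ (hm₂.head hv) hn₂')

theorem ConfluentModulo.locallyConfluentModulo (hE : ∀ a, E a a) (h : ConfluentModulo R E) :
    LocallyConfluentModulo R E :=
  ⟨fun a _ _ hab hac => h a a _ _ (.single hab) (hE a) (.single hac),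
    fun _ _ _ hba hac => h _ _ _ _ .refl hba (.single hac)⟩

theorem confluentModulo_iff_locallyConfluentModulo (hwf : WellFounded (flip R))
    (hE : Equivalence E) : ConfluentModulo R E ↔ LocallyConfluentModulo R E := by
  refine ⟨ConfluentModulo.locallyConfluentModulo hE.refl, fun h a a' b c hab haa' ha'c => ?_⟩
  obtain ⟨n₁, hn₁⟩ := exists_isNormalForm hwf b
  obtain ⟨n₂, hn₂⟩ := exists_isNormalForm hwf c
  have hU := normalFormUniqueModulo_of_locallyConfluentModulo hwf hE h
  exact ⟨n₁, n₂, hn₁.1, hn₂.1, isNormalForm_equiv_of_equiv hwf hE h.2 (fun z _ => hU z)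
    (fun z _ => hU z) haa' (hn₁.head hab) (hn₂.head ha'c)⟩

section Invariant

variable {A : Type*} {r e : A → A → Prop} {I : Set A}

theorem mem_of_reflTransGen (hinv : ∀ s s' : A, s ∈ I → r s s' → s' ∈ I) {s t : A}
    (hs : s ∈ I) (h : ReflTransGen r s t) : t ∈ I := by
  induction h with
  | refl => exact hs
  | tail _ hst ih => exact hinv _ _ ih hst

theorem reflTransGen_subrel_iff (hinv : ∀ s s' : A, s ∈ I → r s s' → s' ∈ I) {x y : I} :
    ReflTransGen (Subrel r (· ∈ I)) x y ↔ ReflTransGen r x y := by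
  refine ⟨fun h => h.lift Subtype.val fun _ _ => id, fun h => ?_⟩
  obtain ⟨y, hy⟩ := y
  replace h : ReflTransGen r x y := h
  induction h with
  | refl => exact .refl
  | tail hst htu ih => exact (ih (mem_of_reflTransGen hinv x.2 hst)).tail htu

theorem reflTransGen_restrict_iff (hinv : ∀ s s' : A, s ∈ I → r s s' → s' ∈ I) {s t : A}
    (hs : s ∈ I) :
    ReflTransGen (fun a b => a ∈ I ∧ b ∈ I ∧ r a b) s t ↔ ReflTransGen r s t := by
  refine ⟨fun h => h.lift id fun _ _ hab => hab.2.2, fun h => ?_⟩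
  induction h with
  | refl => exact .refl
  | tail hst htu ih =>
    have hmem := mem_of_reflTransGen hinv hs hst
    exact ih.tail ⟨hmem, hinv _ _ hmem htu, htu⟩

theorem joinModulo_subrel_iff (hinv : ∀ s s' : A, s ∈ I → r s s' → s' ∈ I) {x y : I} :
    JoinModulo (Subrel r (· ∈ I)) (Subrel e (· ∈ I)) x y ↔
      ∃ u₁ u₂ : A, ReflTransGen (fun a b => a ∈ I ∧ b ∈ I ∧ r a b) x u₁ ∧
        ReflTransGen (fun a b => a ∈ I ∧ b ∈ I ∧ r a b) y u₂ ∧ e u₁ u₂ := by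
  simp only [JoinModulo, reflTransGen_subrel_iff hinv, reflTransGen_restrict_iff hinv x.2,
    reflTransGen_restrict_iff hinv y.2, Subtype.exists, subrel_val]
  exact ⟨fun ⟨u₁, _, u₂, _, h⟩ => ⟨u₁, u₂, h⟩, fun ⟨u₁, u₂, h₁, h₂, h⟩ =>
    ⟨u₁, mem_of_reflTransGen hinv x.2 h₁, u₂, mem_of_reflTransGen hinv y.2 h₂, h₁, h₂, h⟩⟩

end Invariant

end Relation

/-- Huet's lemma under invariant: if `I` is an invariant, the system is
terminating under `I`, and `e` is an equivalence, then the system is observably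
confluent modulo `e` (joinable modulo `e` via `I`-states) iff it is locally
observably confluent modulo `e` (all observable α- and β-corners are joinable
modulo `e` via `I`-states). -/
theorem huet_lemma_under_invariant {A : Type*} (r : A → A → Prop) (e : A → A → Prop)
    (I : Set A)
    (hequiv : Equivalence e)
    (hinv : ∀ s s' : A, s ∈ I → r s s' → s' ∈ I)
    (hterm : WellFounded (fun s t => (t ∈ I ∧ s ∈ I ∧ r t s))) :
    (∀ s₀ s₀' s₁ s₂ : A, s₀ ∈ I → s₀' ∈ I → s₁ ∈ I → s₂ ∈ I →
        Relation.ReflTransGen r s₀ s₁ → e s₀ s₀' → Relation.ReflTransGen r s₀' s₂ →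
        ∃ u₁ u₂ : A,
          Relation.ReflTransGen (fun a b => a ∈ I ∧ b ∈ I ∧ r a b) s₁ u₁ ∧
          Relation.ReflTransGen (fun a b => a ∈ I ∧ b ∈ I ∧ r a b) s₂ u₂ ∧ e u₁ u₂) ↔
    ((∀ s₀ s₁ s₂ : A, s₀ ∈ I → s₁ ∈ I → s₂ ∈ I →
        r s₀ s₁ → r s₀ s₂ →
        ∃ u₁ u₂ : A,
          Relation.ReflTransGen (fun a b => a ∈ I ∧ b ∈ I ∧ r a b) s₁ u₁ ∧
          Relation.ReflTransGen (fun a b => a ∈ I ∧ b ∈ I ∧ r a b) s₂ u₂ ∧ e u₁ u₂) ∧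
     (∀ s₀ s₁ s₂ : A, s₀ ∈ I → s₁ ∈ I → s₂ ∈ I →
        e s₁ s₀ → r s₀ s₂ →
        ∃ u₁ u₂ : A,
          Relation.ReflTransGen (fun a b => a ∈ I ∧ b ∈ I ∧ r a b) s₁ u₁ ∧
          Relation.ReflTransGen (fun a b => a ∈ I ∧ b ∈ I ∧ r a b) s₂ u₂ ∧ e u₁ u₂)) := by
  have hwf : WellFounded (flip (Subrel r (· ∈ I))) :=
    (InvImage.wf Subtype.val hterm).mono fun x y h => ⟨y.2, x.2, h⟩
  have key := Relation.confluentModulo_iff_locallyConfluentModulo (E := Subrel e (· ∈ I)) hwf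
    (hequiv.comap Subtype.val)
  simp only [Relation.ConfluentModulo, Relation.LocallyConfluentModulo,
    Relation.joinModulo_subrel_iff hinv, Relation.reflTransGen_subrel_iff hinv, Subtype.forall,
    subrel_val] at key
  constructor
  · intro H
    obtain ⟨hα, hβ⟩ := key.1 fun s₀ h₀ s₀' h₀' s₁ h₁ s₂ h₂ => H s₀ s₀' s₁ s₂ h₀ h₀' h₁ h₂
    exact ⟨fun s₀ s₁ s₂ h₀ h₁ h₂ => hα s₀ h₀ s₁ h₁ s₂ h₂,
      fun s₀ s₁ s₂ h₀ h₁ h₂ => hβ s₀ h₀ s₁ h₁ s₂ h₂⟩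
  · rintro ⟨hα, hβ⟩ s₀ s₀' s₁ s₂ h₀ h₀' h₁ h₂
    exact key.2 ⟨fun s₀ h₀ s₁ h₁ s₂ h₂ => hα s₀ s₁ s₂ h₀ h₁ h₂,
      fun s₀ h₀ s₁ h₁ s₂ h₂ => hβ s₀ s₁ s₂ h₀ h₁ h₂⟩ s₀ h₀ s₀' h₀' s₁ h₁ s₂ h₂
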